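/- arXiv:1303.3825 — 2 statements merged into one kernel-verified Lean document; each statement's English description precedes it below -/
import Mathlib

section
/- For every p = (p_x, p_r) ∈ ℝ × [0,∞), the double integral ∬_{x ∈ ℝ, y > 0, y > p^2 + p_x^2 - 2x p_x} 1/(e^{x^2 + y - p^2} - 1) dy dx is bounded above by √π · ∑_{k≥1} k^{-3/2}, where p^2 = p_x^2 + p_r^2; in particular the bound is finite and independent of p. -/
/-!
On the region, `t = x² + y - p² > (x - p_x)² ≥ 0`, so `1 / (eᵗ - 1) = ∑_{k ≥ 1} e^{-kt}` and the
integral is at most the sum of the integrals of `e^{-kt}` over the half-plane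
`y > p² + p_x² - 2 x p_x`. There `t = (x - p_x)² + (y - p² - p_x² + 2 x p_x)`, so each term
factorizes into a Gaussian integral `√(π / k)` in `x` and an exponential integral `1 / k` in `y`.
-/

open MeasureTheory Set Real

theorem hasSum_pnat_exp_neg_mul {t : ℝ} (ht : 0 < t) :
    HasSum (fun k : ℕ+ => exp (-k * t)) (exp t - 1)⁻¹ := by
  have hr : exp (-t) < 1 := exp_lt_one_iff.mpr (neg_neg_of_pos ht)
  have hpow (n : ℕ) : exp (-n * t) = exp (-t) ^ n := by rw [← exp_nat_mul]; ring_nf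
  have hsum : (exp t - 1)⁻¹ + exp (-(0 : ℕ) * t) = (1 - exp (-t))⁻¹ := by
    have : exp t - 1 ≠ 0 := (sub_pos.mpr (one_lt_exp_iff.mpr ht)).ne'
    rw [Nat.cast_zero, neg_zero, zero_mul, exp_zero, exp_neg]
    field_simp
    ring
  refine (hasSum_pnat_iff (f := fun n : ℕ => exp (-n * t))).mpr ?_
  rw [hsum]
  simpa only [hpow] using hasSum_geometric_of_lt_one (exp_nonneg _) hr

theorem ofReal_inv_exp_sub_one {t : ℝ} (ht : 0 < t) :
    ENNReal.ofReal (exp t - 1)⁻¹ = ∑' k : ℕ+, ENNReal.ofReal (exp (-k * t)) := by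
  rw [← (hasSum_pnat_exp_neg_mul ht).tsum_eq, ENNReal.ofReal_tsum_of_nonneg
    (fun _ => exp_nonneg _) (hasSum_pnat_exp_neg_mul ht).summable]

theorem lintegral_Ioi_exp_neg_mul_sub (c : ℝ) {a : ℝ} (ha : 0 < a) :
    ∫⁻ y in Ioi c, ENNReal.ofReal (exp (-a * (y - c))) = ENNReal.ofReal a⁻¹ := by
  have hsplit (y : ℝ) : exp (-a * (y - c)) = exp (a * c) * exp (-a * y) := by
    rw [← exp_add]; ring_nf
  have hint : IntegrableOn (fun y => exp (-a * (y - c))) (Ioi c) := by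
    simp only [hsplit]
    exact (integrableOn_exp_mul_Ioi (neg_neg_of_pos ha) c).const_mul _
  rw [← ofReal_integral_eq_lintegral_ofReal hint (ae_of_all _ fun _ => exp_nonneg _)]
  simp only [hsplit]
  rw [integral_const_mul, integral_exp_mul_Ioi (neg_neg_of_pos ha), neg_div_neg_eq,
    ← mul_div_assoc, ← exp_add, neg_mul, add_neg_cancel, exp_zero, one_div]

theorem lintegral_exp_neg_mul_sub_sq (b : ℝ) {a : ℝ} (ha : 0 < a) :
    ∫⁻ x, ENNReal.ofReal (exp (-a * (x - b) ^ 2)) = ENNReal.ofReal √(π / a) := by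
  rw [← ofReal_integral_eq_lintegral_ofReal ((integrable_exp_neg_mul_sq ha).comp_sub_right b)
    (ae_of_all _ fun _ => exp_nonneg _),
    integral_sub_right_eq_self (fun x => exp (-a * x ^ 2)) b, integral_gaussian]

theorem inv_mul_sqrt_pi_div {a : ℝ} (ha : 0 < a) : a⁻¹ * √(π / a) = √π * a ^ (-(3 : ℝ) / 2) := by
  rw [show -(3 : ℝ) / 2 = -(1 + 1 / 2) by norm_num, rpow_neg ha.le, rpow_add ha, rpow_one,
    ← sqrt_eq_rpow, sqrt_div' _ ha.le]
  field_simp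

theorem lintegral_epigraph_mul_exp {φ : ℝ → ℝ} (hφ : Measurable φ) {g : ℝ → ENNReal}
    (hg : Measurable g) {a : ℝ} (ha : 0 < a) :
    ∫⁻ q in {q : ℝ × ℝ | φ q.1 < q.2}, g q.1 * ENNReal.ofReal (exp (-a * (q.2 - φ q.1))) =
      ENNReal.ofReal a⁻¹ * ∫⁻ x, g x := by
  have hS : MeasurableSet {q : ℝ × ℝ | φ q.1 < q.2} :=
    measurableSet_lt (by fun_prop) measurable_snd
  rw [← lintegral_indicator hS, Measure.volume_eq_prod,
    lintegral_prod _ ((Measurable.indicator (by fun_prop) hS).aemeasurable),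
    ← lintegral_const_mul' _ _ ENNReal.ofReal_ne_top]
  refine lintegral_congr fun x => ?_
  change ∫⁻ y, (Ioi (φ x)).indicator (fun y => g x * ENNReal.ofReal (exp (-a * (y - φ x)))) y = _
  rw [lintegral_indicator measurableSet_Ioi, lintegral_const_mul _ (by fun_prop),
    lintegral_Ioi_exp_neg_mul_sub _ ha, mul_comm]

theorem sq_add_sub_pos_of_above_line {P b x y : ℝ} (h : P + b ^ 2 - 2 * x * b < y) :
    0 < x ^ 2 + y - P := by
  nlinarith [sq_nonneg (x - b)]

theorem lintegral_exp_neg_mul_above_line (P b : ℝ) {a : ℝ} (ha : 0 < a) :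
    ∫⁻ q in {q : ℝ × ℝ | P + b ^ 2 - 2 * q.1 * b < q.2},
        ENNReal.ofReal (exp (-a * (q.1 ^ 2 + q.2 - P))) =
      ENNReal.ofReal (√π * a ^ (-(3 : ℝ) / 2)) := by
  have hsplit (q : ℝ × ℝ) : ENNReal.ofReal (exp (-a * (q.1 ^ 2 + q.2 - P))) =
      ENNReal.ofReal (exp (-a * (q.1 - b) ^ 2)) *
        ENNReal.ofReal (exp (-a * (q.2 - (P + b ^ 2 - 2 * q.1 * b)))) := by
    rw [← ENNReal.ofReal_mul (exp_nonneg _), ← exp_add]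
    ring_nf
  simp only [hsplit]
  rw [lintegral_epigraph_mul_exp (φ := fun x => P + b ^ 2 - 2 * x * b)
      (g := fun x => ENNReal.ofReal (exp (-a * (x - b) ^ 2))) (by fun_prop) (by fun_prop) ha,
    lintegral_exp_neg_mul_sub_sq b ha,
    ← ENNReal.ofReal_mul (inv_nonneg.mpr ha.le), inv_mul_sqrt_pi_div ha]

theorem lintegral_inv_exp_sub_one_above_line (P b : ℝ) :
    ∫⁻ q in {q : ℝ × ℝ | P + b ^ 2 - 2 * q.1 * b < q.2},
        ENNReal.ofReal (1 / (exp (q.1 ^ 2 + q.2 - P) - 1)) =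
      ENNReal.ofReal (√π * ∑' k : ℕ+, (k : ℝ) ^ (-(3 : ℝ) / 2)) := by
  set H := {q : ℝ × ℝ | P + b ^ 2 - 2 * q.1 * b < q.2}
  have hH : MeasurableSet H := measurableSet_lt (by fun_prop) measurable_snd
  have hsum : Summable (fun k : ℕ+ => (k : ℝ) ^ (-(3 : ℝ) / 2)) :=
    (Real.summable_nat_rpow.mpr (by norm_num)).comp_injective PNat.coe_injective
  calc _ = ∑' k : ℕ+, ∫⁻ q in H, ENNReal.ofReal (exp (-k * (q.1 ^ 2 + q.2 - P))) := by
        rw [setLIntegral_congr_fun hH fun q hq => by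
            rw [one_div, ofReal_inv_exp_sub_one (sq_add_sub_pos_of_above_line hq)],
          lintegral_tsum fun _ => by fun_prop]
    _ = ∑' k : ℕ+, ENNReal.ofReal (√π * (k : ℝ) ^ (-(3 : ℝ) / 2)) :=
        tsum_congr fun k => lintegral_exp_neg_mul_above_line P b (by positivity)
    _ = _ := by
        rw [← ENNReal.ofReal_tsum_of_nonneg (fun _ => by positivity) (hsum.mul_left _),
          tsum_mul_left]

theorem stmt_9_general (px pr : ℝ) :
    ∫ q in {q : ℝ × ℝ | 0 < q.2 ∧ (px ^ 2 + pr ^ 2) + px ^ 2 - 2 * q.1 * px < q.2},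
        1 / (Real.exp (q.1 ^ 2 + q.2 - (px ^ 2 + pr ^ 2)) - 1) ≤
      Real.sqrt Real.pi * ∑' k : ℕ+, (k : ℝ) ^ (-(3 : ℝ) / 2) := by
  set P := px ^ 2 + pr ^ 2
  set S := {q : ℝ × ℝ | 0 < q.2 ∧ P + px ^ 2 - 2 * q.1 * px < q.2}
  have hS : MeasurableSet S :=
    (measurableSet_lt measurable_const measurable_snd).inter
      (measurableSet_lt (by fun_prop) measurable_snd)
  have hnonneg (q : ℝ × ℝ) (hq : q ∈ S) :
      0 ≤ 1 / (exp (q.1 ^ 2 + q.2 - P) - 1) :=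
    one_div_nonneg.mpr (sub_nonneg.mpr (one_le_exp (sq_add_sub_pos_of_above_line hq.2).le))
  rw [integral_eq_lintegral_of_nonneg_ae (ae_restrict_of_forall_mem hS hnonneg)
    (by fun_prop : Measurable _).aestronglyMeasurable.restrict]
  refine ENNReal.toReal_le_of_le_ofReal (by positivity) ?_
  rw [← lintegral_inv_exp_sub_one_above_line P px]
  exact lintegral_mono_set fun q hq => hq.2

/-- The double integral `∬_{y>0, y > p² + p_x² - 2xp_x} (e^{x²+y-p²} - 1)⁻¹ dy dx`
is bounded by `√π ∑_{k≥1} k^{-3/2}`, uniformly in `p`. -/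
theorem stmt_9 (px pr : ℝ) (hpr : 0 ≤ pr) :
    ∫ q in {q : ℝ × ℝ | 0 < q.2 ∧ (px ^ 2 + pr ^ 2) + px ^ 2 - 2 * q.1 * px < q.2},
        1 / (Real.exp (q.1 ^ 2 + q.2 - (px ^ 2 + pr ^ 2)) - 1) ≤
      Real.sqrt Real.pi * ∑' k : ℕ+, (k : ℝ) ^ (-(3 : ℝ) / 2) :=
  stmt_9_general px pr
end

section
/- Let P(p) = 1/(e^{|p|²}-1) on {|p| ≥ λ}, λ > 0, and let w(x,·) satisfy the orthogonality ∫ p_x w P dp = ∫ |p|² w P dp = 0 and let γ = ∫ p_x² |p|² P(1+P) dp. Define W(x) = (1/2)∫ p_x f̃² P/(1+P) dp for f̃ = (a|p|² + b p_x)(1+P) + w with ∫ p_x |p|² f̃ P dp = 0. Then W(x) = (1/2)∫ p_x w² P/(1+P) dp - (1/γ) (∫ p_x² w P dp)(∫ p_x |p|² w P dp); i.e., the hydrodynamic contributions to W cancel exactly under the zero-energy-flow constraint. -/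
open MeasureTheory

lemma odd3_vanish (P : ℝ × ℝ → ℝ)
    (hPdef : ∀ p : ℝ × ℝ, P p = 1 / (Real.exp (p.1 ^ 2 + p.2 ^ 2) - 1))
    (S : Set (ℝ × ℝ)) (lam : ℝ)
    (hS : S = {p : ℝ × ℝ | 0 < p.2 ∧ lam ^ 2 ≤ p.1 ^ 2 + p.2 ^ 2})
    (hSm : MeasurableSet S) :
    (∫ p in S, p.1 ^ 3 * P p * (1 + P p) * p.2) = 0 := by
  set F : ℝ × ℝ → ℝ := fun p => p.1 ^ 3 * P p * (1 + P p) * p.2 with hF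
  have hT : MeasurePreserving (fun p : ℝ × ℝ => (-p.1, p.2)) volume volume := by
    rw [Measure.volume_eq_prod ℝ ℝ]
    exact (Measure.measurePreserving_neg _).prod (MeasurePreserving.id _)
  have hemb : MeasurableEmbedding (fun p : ℝ × ℝ => (-p.1, p.2)) :=
    ((MeasurableEquiv.neg ℝ).prodCongr (MeasurableEquiv.refl ℝ)).measurableEmbedding
  have hind : ∀ p : ℝ × ℝ, S.indicator F (-p.1, p.2) = - S.indicator F p := by
    intro p
    have hmem : ((-p.1, p.2) ∈ S) ↔ p ∈ S := by
      simp [hS, neg_sq]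
    have hFT : F (-p.1, p.2) = - F p := by
      have hP : P (-p.1, p.2) = P p := by rw [hPdef, hPdef]; norm_num [neg_sq]
      simp only [hF, hP]
      ring
    by_cases hp : p ∈ S
    · rw [Set.indicator_of_mem (hmem.mpr hp), Set.indicator_of_mem hp, hFT]
    · rw [Set.indicator_of_notMem (fun h => hp (hmem.mp h)),
        Set.indicator_of_notMem hp, neg_zero]
  have key : (∫ p, S.indicator F p) = - ∫ p, S.indicator F p := by
    conv_lhs => rw [← hT.integral_comp hemb (S.indicator F)]
    simp only [hind, integral_neg]
  have h0 : (∫ p, S.indicator F p) = 0 := by linarith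
  rwa [← integral_indicator hSm]

/-- With `f̃ = (a|p|² + b p_x)(1+P) + w`, orthogonality `∫ p_x w P = ∫ |p|² w P = 0`,
the zero-energy-flow constraint `∫ p_x |p|² f̃ P = 0` and
`γ = ∫ p_x²|p|² P(1+P)`, the linearized entropy flux satisfies
`W = (1/2)∫ p_x f̃² P/(1+P) = (1/2)∫ p_x w² P/(1+P) - (1/γ)(∫ p_x² w P)(∫ p_x|p|² w P)`:
the hydrodynamic contributions cancel exactly. All integrals are over
`S = {(p_x,p_r) : p_r > 0, p_x² + p_r² ≥ λ²}` with measure `p_r dp_x dp_r`,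
and `P(p) = 1/(e^{p_x²+p_r²}-1)`. -/
theorem stmt_18 (lam a b γ : ℝ) (hlam : 0 < lam) (hγ : 0 < γ)
    (P : ℝ × ℝ → ℝ) (hPdef : ∀ p : ℝ × ℝ, P p = 1 / (Real.exp (p.1 ^ 2 + p.2 ^ 2) - 1))
    (S : Set (ℝ × ℝ)) (hS : S = {p : ℝ × ℝ | 0 < p.2 ∧ lam ^ 2 ≤ p.1 ^ 2 + p.2 ^ 2})
    (w ft : ℝ × ℝ → ℝ)
    (hft : ∀ p ∈ S, ft p =
      (a * (p.1 ^ 2 + p.2 ^ 2) + b * p.1) * (1 + P p) + w p)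
    -- integrability of all relevant moments
    (hint : ∀ m n : ℕ, IntegrableOn
      (fun p : ℝ × ℝ => p.1 ^ m * (p.1 ^ 2 + p.2 ^ 2) ^ n * P p * (1 + P p) * p.2) S)
    (hintw : ∀ m n : ℕ, IntegrableOn
      (fun p : ℝ × ℝ => p.1 ^ m * (p.1 ^ 2 + p.2 ^ 2) ^ n * w p * P p * p.2) S)
    (hintw2 : IntegrableOn
      (fun p : ℝ × ℝ => p.1 * (w p) ^ 2 * (P p / (1 + P p)) * p.2) S)
    -- γ and the vanishing odd moments
    (hγdef : γ = ∫ p in S, p.1 ^ 2 * (p.1 ^ 2 + p.2 ^ 2) * P p * (1 + P p) * p.2)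
    (hodd1 : (∫ p in S, p.1 * (p.1 ^ 2 + p.2 ^ 2) ^ 2 * P p * (1 + P p) * p.2) = 0)
    (hodd2 : (∫ p in S, p.1 ^ 3 * (p.1 ^ 2 + p.2 ^ 2) * P p * (1 + P p) * p.2) = 0)
    -- orthogonality conditions
    (horth1 : (∫ p in S, p.1 * w p * P p * p.2) = 0)
    (horth2 : (∫ p in S, (p.1 ^ 2 + p.2 ^ 2) * w p * P p * p.2) = 0)
    -- zero energy flow
    (hflow : (∫ p in S, p.1 * (p.1 ^ 2 + p.2 ^ 2) * ft p * P p * p.2) = 0) :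
    (1 / 2) * ∫ p in S, p.1 * (ft p) ^ 2 * (P p / (1 + P p)) * p.2 =
      (1 / 2) * (∫ p in S, p.1 * (w p) ^ 2 * (P p / (1 + P p)) * p.2) -
        (1 / γ) * (∫ p in S, p.1 ^ 2 * w p * P p * p.2) *
          (∫ p in S, p.1 * (p.1 ^ 2 + p.2 ^ 2) * w p * P p * p.2) := by
  have hSm : MeasurableSet S := by
    rw [hS]
    have hm : Measurable fun p : ℝ × ℝ => p.1 ^ 2 + p.2 ^ 2 := by fun_prop
    exact (measurableSet_lt measurable_const measurable_snd).inter
      (measurableSet_le measurable_const hm)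
  -- pointwise: 1 + P p ≠ 0 on S
  have hPpos : ∀ p ∈ S, 0 < P p := by
    intro p hp
    rw [hS] at hp
    have hX : lam ^ 2 ≤ p.1 ^ 2 + p.2 ^ 2 := hp.2
    have h0 : (0:ℝ) < p.1 ^ 2 + p.2 ^ 2 := lt_of_lt_of_le (by positivity) hX
    have : (1:ℝ) < Real.exp (p.1 ^ 2 + p.2 ^ 2) := by
      calc (1:ℝ) = Real.exp 0 := Real.exp_zero.symm
      _ < _ := Real.exp_lt_exp.mpr h0
    rw [hPdef]
    have : 0 < Real.exp (p.1 ^ 2 + p.2 ^ 2) - 1 := by linarith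
    positivity
  -- pointwise expansion of the main integrand
  have key : Set.EqOn (fun p : ℝ × ℝ => p.1 * (ft p) ^ 2 * (P p / (1 + P p)) * p.2)
      (fun p : ℝ × ℝ =>
        a ^ 2 * (p.1 ^ 1 * (p.1 ^ 2 + p.2 ^ 2) ^ 2 * P p * (1 + P p) * p.2)
        + (2 * a * b) * (p.1 ^ 2 * (p.1 ^ 2 + p.2 ^ 2) ^ 1 * P p * (1 + P p) * p.2)
        + b ^ 2 * (p.1 ^ 3 * (p.1 ^ 2 + p.2 ^ 2) ^ 0 * P p * (1 + P p) * p.2)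
        + (2 * a) * (p.1 ^ 1 * (p.1 ^ 2 + p.2 ^ 2) ^ 1 * w p * P p * p.2)
        + (2 * b) * (p.1 ^ 2 * (p.1 ^ 2 + p.2 ^ 2) ^ 0 * w p * P p * p.2)
        + p.1 * (w p) ^ 2 * (P p / (1 + P p)) * p.2) S := by
    intro p hp
    have h1 : (0:ℝ) < 1 + P p := by linarith [hPpos p hp]
    have h1' : (1:ℝ) + P p ≠ 0 := ne_of_gt h1
    simp only [hft p hp]
    field_simp
    ring
  -- integrability of the pieces
  have i1 : IntegrableOn (fun p : ℝ × ℝ =>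
      a ^ 2 * (p.1 ^ 1 * (p.1 ^ 2 + p.2 ^ 2) ^ 2 * P p * (1 + P p) * p.2)) S :=
    (hint 1 2).const_mul _
  have i2 : IntegrableOn (fun p : ℝ × ℝ =>
      (2 * a * b) * (p.1 ^ 2 * (p.1 ^ 2 + p.2 ^ 2) ^ 1 * P p * (1 + P p) * p.2)) S :=
    (hint 2 1).const_mul _
  have i3 : IntegrableOn (fun p : ℝ × ℝ =>
      b ^ 2 * (p.1 ^ 3 * (p.1 ^ 2 + p.2 ^ 2) ^ 0 * P p * (1 + P p) * p.2)) S :=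
    (hint 3 0).const_mul _
  have i4 : IntegrableOn (fun p : ℝ × ℝ =>
      (2 * a) * (p.1 ^ 1 * (p.1 ^ 2 + p.2 ^ 2) ^ 1 * w p * P p * p.2)) S :=
    (hintw 1 1).const_mul _
  have i5 : IntegrableOn (fun p : ℝ × ℝ =>
      (2 * b) * (p.1 ^ 2 * (p.1 ^ 2 + p.2 ^ 2) ^ 0 * w p * P p * p.2)) S :=
    (hintw 2 0).const_mul _
  have i12 : IntegrableOn (fun p : ℝ × ℝ =>
      a ^ 2 * (p.1 ^ 1 * (p.1 ^ 2 + p.2 ^ 2) ^ 2 * P p * (1 + P p) * p.2)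
      + (2 * a * b) * (p.1 ^ 2 * (p.1 ^ 2 + p.2 ^ 2) ^ 1 * P p * (1 + P p) * p.2)) S := i1.add i2
  have i123 : IntegrableOn (fun p : ℝ × ℝ =>
      a ^ 2 * (p.1 ^ 1 * (p.1 ^ 2 + p.2 ^ 2) ^ 2 * P p * (1 + P p) * p.2)
      + (2 * a * b) * (p.1 ^ 2 * (p.1 ^ 2 + p.2 ^ 2) ^ 1 * P p * (1 + P p) * p.2)
      + b ^ 2 * (p.1 ^ 3 * (p.1 ^ 2 + p.2 ^ 2) ^ 0 * P p * (1 + P p) * p.2)) S := i12.add i3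
  have i1234 : IntegrableOn (fun p : ℝ × ℝ =>
      a ^ 2 * (p.1 ^ 1 * (p.1 ^ 2 + p.2 ^ 2) ^ 2 * P p * (1 + P p) * p.2)
      + (2 * a * b) * (p.1 ^ 2 * (p.1 ^ 2 + p.2 ^ 2) ^ 1 * P p * (1 + P p) * p.2)
      + b ^ 2 * (p.1 ^ 3 * (p.1 ^ 2 + p.2 ^ 2) ^ 0 * P p * (1 + P p) * p.2)
      + (2 * a) * (p.1 ^ 1 * (p.1 ^ 2 + p.2 ^ 2) ^ 1 * w p * P p * p.2)) S := i123.add i4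
  have i12345 : IntegrableOn (fun p : ℝ × ℝ =>
      a ^ 2 * (p.1 ^ 1 * (p.1 ^ 2 + p.2 ^ 2) ^ 2 * P p * (1 + P p) * p.2)
      + (2 * a * b) * (p.1 ^ 2 * (p.1 ^ 2 + p.2 ^ 2) ^ 1 * P p * (1 + P p) * p.2)
      + b ^ 2 * (p.1 ^ 3 * (p.1 ^ 2 + p.2 ^ 2) ^ 0 * P p * (1 + P p) * p.2)
      + (2 * a) * (p.1 ^ 1 * (p.1 ^ 2 + p.2 ^ 2) ^ 1 * w p * P p * p.2)
      + (2 * b) * (p.1 ^ 2 * (p.1 ^ 2 + p.2 ^ 2) ^ 0 * w p * P p * p.2)) S := i1234.add i5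
  have hmain : (∫ p in S, p.1 * (ft p) ^ 2 * (P p / (1 + P p)) * p.2) =
      a ^ 2 * (∫ p in S, p.1 ^ 1 * (p.1 ^ 2 + p.2 ^ 2) ^ 2 * P p * (1 + P p) * p.2)
      + (2 * a * b) * (∫ p in S, p.1 ^ 2 * (p.1 ^ 2 + p.2 ^ 2) ^ 1 * P p * (1 + P p) * p.2)
      + b ^ 2 * (∫ p in S, p.1 ^ 3 * (p.1 ^ 2 + p.2 ^ 2) ^ 0 * P p * (1 + P p) * p.2)
      + (2 * a) * (∫ p in S, p.1 ^ 1 * (p.1 ^ 2 + p.2 ^ 2) ^ 1 * w p * P p * p.2)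
      + (2 * b) * (∫ p in S, p.1 ^ 2 * (p.1 ^ 2 + p.2 ^ 2) ^ 0 * w p * P p * p.2)
      + (∫ p in S, p.1 * (w p) ^ 2 * (P p / (1 + P p)) * p.2) := by
    rw [setIntegral_congr_fun hSm key, ← integral_const_mul, ← integral_const_mul,
      ← integral_const_mul, ← integral_const_mul, ← integral_const_mul,
      ← integral_add i1 i2, ← integral_add i12 i3,
      ← integral_add i123 i4,
      ← integral_add i1234 i5,
      ← integral_add i12345 hintw2]
  -- expand the flow constraint
  have keyf : Set.EqOn (fun p : ℝ × ℝ => p.1 * (p.1 ^ 2 + p.2 ^ 2) * ft p * P p * p.2)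
      (fun p : ℝ × ℝ =>
        a * (p.1 ^ 1 * (p.1 ^ 2 + p.2 ^ 2) ^ 2 * P p * (1 + P p) * p.2)
        + b * (p.1 ^ 2 * (p.1 ^ 2 + p.2 ^ 2) ^ 1 * P p * (1 + P p) * p.2)
        + (p.1 ^ 1 * (p.1 ^ 2 + p.2 ^ 2) ^ 1 * w p * P p * p.2)) S := by
    intro p hp
    simp only [hft p hp]
    ring
  have j1 : IntegrableOn (fun p : ℝ × ℝ =>
      a * (p.1 ^ 1 * (p.1 ^ 2 + p.2 ^ 2) ^ 2 * P p * (1 + P p) * p.2)) S :=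
    (hint 1 2).const_mul _
  have j2 : IntegrableOn (fun p : ℝ × ℝ =>
      b * (p.1 ^ 2 * (p.1 ^ 2 + p.2 ^ 2) ^ 1 * P p * (1 + P p) * p.2)) S :=
    (hint 2 1).const_mul _
  have j12 : IntegrableOn (fun p : ℝ × ℝ =>
      a * (p.1 ^ 1 * (p.1 ^ 2 + p.2 ^ 2) ^ 2 * P p * (1 + P p) * p.2)
      + b * (p.1 ^ 2 * (p.1 ^ 2 + p.2 ^ 2) ^ 1 * P p * (1 + P p) * p.2)) S := j1.add j2
  have hflow' :
      a * (∫ p in S, p.1 ^ 1 * (p.1 ^ 2 + p.2 ^ 2) ^ 2 * P p * (1 + P p) * p.2)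
      + b * (∫ p in S, p.1 ^ 2 * (p.1 ^ 2 + p.2 ^ 2) ^ 1 * P p * (1 + P p) * p.2)
      + (∫ p in S, p.1 ^ 1 * (p.1 ^ 2 + p.2 ^ 2) ^ 1 * w p * P p * p.2) = 0 := by
    rw [← integral_const_mul, ← integral_const_mul,
      ← integral_add j1 j2, ← integral_add j12 (hintw 1 1),
      ← setIntegral_congr_fun hSm keyf]
    exact hflow
  have hA30 : (∫ p in S, p.1 ^ 3 * P p * (1 + P p) * p.2) = 0 :=
    odd3_vanish P hPdef S lam hS hSm
  -- clean up the exponents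
  simp only [pow_one, pow_zero, mul_one] at hmain hflow'
  rw [← hγdef] at hmain hflow'
  rw [hodd1, hA30] at hmain
  rw [hodd1] at hflow'
  rw [hmain]
  have hγ' : γ ≠ 0 := ne_of_gt hγ
  have hI1 : (∫ p in S, p.1 * (p.1 ^ 2 + p.2 ^ 2) * w p * P p * p.2) = -(b * γ) := by
    linarith [hflow']
  rw [hI1]
  field_simp
  ring
end
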